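/- Let p(s), q₁(s), …, q_r(s) ∈ L[s] be nonzero polynomials over a field L with gcd(p, q₁, …, q_r) = 1 and p monic. Let F₂ be the subfield of L generated (over the prime field, or over ℂ if L is a ℂ-algebra field) by all coefficients of the reduced-form rational functions h_i = q_i/p (i.e., coefficients of q_i/gcd(p,q_i) and of p/gcd(p,q_i), the latter taken monic). Then the coefficients of p and of all q_i lie in F₂. -/

import Mathlib

open Polynomial

/-- The monic-normalized gcd of two polynomials over a field. -/
noncomputable def monicGcd {L : Type*} [Field L] [DecidableEq L] (a b : L[X]) : L[X] :=
  C (EuclideanDomain.gcd a b).leadingCoeff⁻¹ * EuclideanDomain.gcd a b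

/-! The reduced denominator `p / gcd(p, qᵢ)` is the cofactor of `gcd(p, qᵢ)` in `p`; since the
`gcd(p, qᵢ)` have no common factor, `p` is the (monic) lcm of these reduced denominators. Taking
gcds, lcms and quotients commutes with extending the field of coefficients, so `p` has its
coefficients in `F₂`, and then so do `gcd(p, qᵢ) = p / (p / gcd(p, qᵢ))` and
`qᵢ = gcd(p, qᵢ) · (qᵢ / gcd(p, qᵢ))`. -/

section EuclideanDomain

variable {R : Type*} [EuclideanDomain R] [DecidableEq R] [NormalizedGCDMonoid R]

theorem normalize_euclideanDomain_gcd (a b : R) : normalize (EuclideanDomain.gcd a b) = gcd a b :=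
  (normalize_eq_normalize
    (dvd_gcd (EuclideanDomain.gcd_dvd_left a b) (EuclideanDomain.gcd_dvd_right a b))
    (EuclideanDomain.dvd_gcd (gcd_dvd_left a b) (gcd_dvd_right a b))).trans (normalize_gcd a b)

theorem normalize_euclideanDomain_lcm (a b : R) : normalize (EuclideanDomain.lcm a b) = lcm a b :=
  (normalize_eq_normalize
    (EuclideanDomain.lcm_dvd (dvd_lcm_left a b) (dvd_lcm_right a b))
    (lcm_dvd (EuclideanDomain.dvd_lcm_left a b) (EuclideanDomain.dvd_lcm_right a b))).trans
    (normalize_lcm a b)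

end EuclideanDomain

theorem Finset.lcm_associated_of_mul_eq {α ι : Type*} [CommMonoidWithZero α]
    [NormalizedGCDMonoid α] (s : Finset ι) {p : α} (hp : p ≠ 0) {g b : ι → α}
    (hgb : ∀ i ∈ s, g i * b i = p)
    (hg : ∀ d, d ∣ p → (∀ i ∈ s, d ∣ g i) → IsUnit d) :
    Associated (s.lcm b) p := by
  obtain ⟨u, hu⟩ : s.lcm b ∣ p := Finset.lcm_dvd fun i hi => Dvd.intro_left _ (hgb i hi)
  have hu_dvd : ∀ i ∈ s, u ∣ g i := by
    intro i hi
    obtain ⟨m, hm⟩ := Finset.dvd_lcm (f := b) hi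
    have hb : b i ≠ 0 := right_ne_zero_of_mul (hgb i hi ▸ hp)
    refine ⟨m, mul_left_cancel₀ hb ?_⟩
    rw [mul_comm, hgb i hi, hu, hm]
    ac_rfl
  have hu_unit : IsUnit u := hg u (Dvd.intro_left _ hu.symm) hu_dvd
  exact ⟨hu_unit.unit, hu.symm⟩

namespace Polynomial

variable {K L : Type*} [Field K] [Field L]

theorem monicGcd_eq_gcd [DecidableEq L] (a b : L[X]) : monicGcd a b = gcd a b := by
  rw [← normalize_euclideanDomain_gcd, monicGcd]
  by_cases h : EuclideanDomain.gcd a b = 0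
  · simp [h]
  · simp [normalize_apply, h, mul_comm]

theorem map_lcm [DecidableEq K] [DecidableEq L] (f : K →+* L) (a b : K[X]) :
    (lcm a b).map f = lcm (a.map f) (b.map f) := by
  rw [← normalize_euclideanDomain_lcm, ← normalize_euclideanDomain_lcm, map_normalize]
  simp only [EuclideanDomain.lcm, map_div, Polynomial.map_mul, gcd_map]

theorem div_mem_lifts (f : K →+* L) {a b : L[X]} (ha : a ∈ lifts f) (hb : b ∈ lifts f) :
    a / b ∈ lifts f := by
  obtain ⟨A, rfl⟩ := (mem_lifts a).1 ha
  obtain ⟨B, rfl⟩ := (mem_lifts b).1 hb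
  exact (mem_lifts _).2 ⟨A / B, map_div f⟩

theorem lcm_mem_lifts [DecidableEq L] (f : K →+* L) {a b : L[X]} (ha : a ∈ lifts f)
    (hb : b ∈ lifts f) : lcm a b ∈ lifts f := by
  classical
  obtain ⟨A, rfl⟩ := (mem_lifts a).1 ha
  obtain ⟨B, rfl⟩ := (mem_lifts b).1 hb
  exact (mem_lifts _).2 ⟨lcm A B, map_lcm f A B⟩

theorem finset_lcm_mem_lifts [DecidableEq L] {ι : Type*} (f : K →+* L) (s : Finset ι)
    {b : ι → L[X]} (hb : ∀ i ∈ s, b i ∈ lifts f) : s.lcm b ∈ lifts f := by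
  classical
  induction s using Finset.induction with
  | empty => exact Finset.lcm_empty (f := b) ▸ one_mem _
  | insert i s hi ih =>
    rw [Finset.lcm_insert]
    exact lcm_mem_lifts f (hb i (s.mem_insert_self i))
      (ih fun j hj => hb j (Finset.mem_insert_of_mem hj))

theorem mem_lifts_subtype_iff {F : Subfield L} {p : L[X]} :
    p ∈ lifts F.subtype ↔ ∀ n, p.coeff n ∈ F := by
  simp [lifts_iff_coeff_lifts]

theorem mem_lifts_closure_of_coeff_mem {s : Set L} {p : L[X]} (h : ∀ n, p.coeff n ∈ s) :
    p ∈ lifts (Subfield.closure s).subtype :=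
  mem_lifts_subtype_iff.2 fun n => Subfield.subset_closure (h n)

end Polynomial

open Finset in
theorem coeffs_in_field_of_reduced_forms_general {L : Type*} [Field L] [DecidableEq L]
    (r : ℕ) (p : L[X]) (q : Fin r → L[X])
    (hp : p.Monic)
    (hgcd : ∀ d : L[X], d ∣ p → (∀ i, d ∣ q i) → IsUnit d)
    (F₂ : Subfield L)
    (hF₂ : F₂ = Subfield.closure
      ((⋃ i, {x | ∃ n, ((q i) / monicGcd p (q i)).coeff n = x}) ∪
       (⋃ i, {x | ∃ n, (p / monicGcd p (q i)).coeff n = x}))) :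
    (∀ n, p.coeff n ∈ F₂) ∧ ∀ i n, (q i).coeff n ∈ F₂ := by
  simp only [← mem_lifts_subtype_iff]
  simp only [monicGcd_eq_gcd] at hF₂
  have hg0 : ∀ i, gcd p (q i) ≠ 0 := fun i => gcd_ne_zero_of_left hp.ne_zero
  have hgb : ∀ i ∈ univ, gcd p (q i) * (p / gcd p (q i)) = p := fun i _ =>
    EuclideanDomain.mul_div_cancel' (hg0 i) (gcd_dvd_left _ _)
  have hcop : ∀ d, d ∣ p → (∀ i ∈ univ, d ∣ gcd p (q i)) → IsUnit d := fun d hdp hd =>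
    hgcd d hdp fun i => (hd i (mem_univ i)).trans (gcd_dvd_right _ _)
  have hp_lcm : univ.lcm (fun i => p / gcd p (q i)) = p :=
    (univ.lcm_associated_of_mul_eq hp.ne_zero hgb hcop).eq_of_normalized
      Finset.normalize_lcm hp.normalize_eq_self
  have hnum : ∀ i, q i / gcd p (q i) ∈ lifts F₂.subtype := fun i =>
    hF₂ ▸ mem_lifts_closure_of_coeff_mem fun n => .inl (Set.mem_iUnion.2 ⟨i, n, rfl⟩)
  have hden : ∀ i, p / gcd p (q i) ∈ lifts F₂.subtype := fun i =>
    hF₂ ▸ mem_lifts_closure_of_coeff_mem fun n => .inr (Set.mem_iUnion.2 ⟨i, n, rfl⟩)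
  have hp_mem : p ∈ lifts F₂.subtype := by
    rw [← hp_lcm]
    exact finset_lcm_mem_lifts _ _ fun i _ => hden i
  refine ⟨hp_mem, fun i => ?_⟩
  have hg_eq : gcd p (q i) = p / (p / gcd p (q i)) :=
    EuclideanDomain.eq_div_of_mul_eq_left
      (right_ne_zero_of_mul (hgb i (mem_univ i) ▸ hp.ne_zero)) (hgb i (mem_univ i))
  have hg_mem : gcd p (q i) ∈ lifts F₂.subtype := hg_eq ▸ div_mem_lifts _ hp_mem (hden i)
  rw [← EuclideanDomain.mul_div_cancel' (hg0 i) (gcd_dvd_right p (q i))]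
  exact mul_mem hg_mem (hnum i)

/-- One direction of the transfer-function lemma: if `p` is monic, all `qᵢ`
are nonzero, and `gcd(p, q₁, …, q_r) = 1`, then the coefficients of `p` and
of all the `qᵢ` lie in the subfield generated by the coefficients of the
reduced forms `qᵢ / gcd(p, qᵢ)` and `p / gcd(p, qᵢ)`. -/
theorem coeffs_in_field_of_reduced_forms {L : Type*} [Field L] [DecidableEq L]
    (r : ℕ) (p : L[X]) (q : Fin r → L[X])
    (hp : p.Monic) (hq : ∀ i, q i ≠ 0)
    (hgcd : ∀ d : L[X], d ∣ p → (∀ i, d ∣ q i) → IsUnit d)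
    (F₂ : Subfield L)
    (hF₂ : F₂ = Subfield.closure
      ((⋃ i, {x | ∃ n, ((q i) / monicGcd p (q i)).coeff n = x}) ∪
       (⋃ i, {x | ∃ n, (p / monicGcd p (q i)).coeff n = x}))) :
    (∀ n, p.coeff n ∈ F₂) ∧ ∀ i n, (q i).coeff n ∈ F₂ :=
  coeffs_in_field_of_reduced_forms_general r p q hp hgcd F₂ hF₂
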